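/- arXiv:2205.06316 — 5 statements merged into one kernel-verified Lean document; each statement's English description precedes it below -/
import Mathlib

section
/- Let G be a semitopological group (all left and right translations are homeomorphisms) whose topology is semiregular (the regular open sets form a base), and suppose that for every regular open neighborhood U of the identity e there exists a neighborhood W of e with W·W⁻¹ ⊆ closure(U). Then inversion x ↦ x⁻¹ is continuous at e. -/
open Pointwise Topology

theorem stmt8 {G : Type*} [Group G] [TopologicalSpace G]
    (hleft : ∀ g : G, IsHomeomorph (fun x : G => g * x))
    (hright : ∀ g : G, IsHomeomorph (fun x : G => x * g))
    (hsemireg : ∀ U : Set G, IsOpen U → ∀ x ∈ U,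
      ∃ O : Set G, O = interior (closure O) ∧ x ∈ O ∧ O ⊆ U)
    (hBaire : ∀ U ∈ 𝓝 (1 : G), U = interior (closure U) →
      ∃ W ∈ 𝓝 (1 : G), W * W⁻¹ ⊆ closure U) :
    ∀ U ∈ 𝓝 (1 : G), ∃ V ∈ 𝓝 (1 : G), V⁻¹ ⊆ U := by
  intro U hU
  obtain ⟨S, hSU, hSopen, hS1⟩ := mem_nhds_iff.mp hU
  obtain ⟨O, hOreg, hO1, hOS⟩ := hsemireg S hSopen 1 hS1
  have hOopen : IsOpen O := by rw [hOreg]; exact isOpen_interior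
  have hOnhds : O ∈ 𝓝 (1 : G) := hOopen.mem_nhds hO1
  obtain ⟨W, hWnhds, hW⟩ := hBaire O hOnhds hOreg
  obtain ⟨V₀, hV₀W, hV₀open, hV₀1⟩ := mem_nhds_iff.mp hWnhds
  refine ⟨V₀, hV₀open.mem_nhds hV₀1, ?_⟩
  intro w hw
  have hwV : w⁻¹ ∈ V₀ := hw
  -- the open set V₀ * w contains w and is contained in closure O
  have hsub : (fun x : G => x * w) '' V₀ ⊆ closure O := by
    rintro _ ⟨v, hv, rfl⟩
    exact hW ⟨v, hV₀W hv, w⁻¹⁻¹, Set.inv_mem_inv.mpr (hV₀W hwV), by group⟩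
  have hopen : IsOpen ((fun x : G => x * w) '' V₀) :=
    (hright w).isOpenMap _ hV₀open
  have hwmem : w ∈ (fun x : G => x * w) '' V₀ := ⟨1, hV₀1, one_mul w⟩
  have : w ∈ interior (closure O) :=
    mem_interior.mpr ⟨_, hsub, hopen, hwmem⟩
  exact hSU (hOS (hOreg ▸ this))
end

section
/- Let G be a paratopological group such that for every neighborhood V of the identity there exists a neighborhood W of the identity with W·W⁻¹ ⊆ V·V. Then G is quasi-regular: every nonempty open set U contains the closure of some nonempty open set. -/
open Pointwise Topology

theorem stmt10 {G : Type*} [Group G] [TopologicalSpace G] [ContinuousMul G]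
    (h : ∀ V ∈ 𝓝 (1 : G), ∃ W ∈ 𝓝 (1 : G), W * W⁻¹ ⊆ V * V) :
    ∀ U : Set G, IsOpen U → U.Nonempty →
      ∃ V : Set G, IsOpen V ∧ V.Nonempty ∧ closure V ⊆ U := by
  intro U hU ⟨x, hx⟩
  set U₀ : Set G := x⁻¹ • U with hU₀def
  have hU₀open : IsOpen U₀ := hU.smul x⁻¹
  have h1 : (1 : G) ∈ U₀ := ⟨x, hx, by simp⟩
  obtain ⟨V', hV'open, hV'1, hV'mul⟩ :=
    exists_open_nhds_one_mul_subset (hU₀open.mem_nhds h1)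
  obtain ⟨W, hWnhds, hWsub⟩ := h V' (hV'open.mem_nhds hV'1)
  have hclW : closure W ⊆ W * W⁻¹ := by
    intro y hy
    have hyW : y • W ∈ 𝓝 y := by
      simpa using smul_mem_nhds_smul y hWnhds
    obtain ⟨z, hz1, hz2⟩ := mem_closure_iff_nhds.mp hy (y • W) hyW
    obtain ⟨w, hw, hwz⟩ := hz1
    exact ⟨z, hz2, w⁻¹, Set.inv_mem_inv.mpr hw, by
      simp [← hwz, mul_assoc]⟩
  have hclU₀ : closure (interior W) ⊆ U₀ :=
    (closure_mono interior_subset).trans (hclW.trans (hWsub.trans hV'mul))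
  refine ⟨x • interior W, isOpen_interior.smul x, ⟨x, 1, mem_interior_iff_mem_nhds.mpr hWnhds, by simp⟩, ?_⟩
  rw [closure_smul]
  intro y hy
  obtain ⟨z, hz, hzy⟩ := hy
  have := hclU₀ hz
  obtain ⟨u, hu, huz⟩ := this
  simpa [← hzy, ← huz] using hu
end

section
/- Let G be a group with a topology such that all right translations are homeomorphisms, and suppose the map x ↦ g·x is a feeble homeomorphism for some g (i.e., for every nonempty open U, interior(g·U) and interior(g⁻¹·U) are nonempty and dense in the respective images). If for every neighborhood U of the identity there exist a neighborhood W and a set M with M ⊆ W ⊆ closure(M), e ∈ M, W ⊆ U, and W·M⁻¹ ⊆ U, then λ_g is a homeomorphism. -/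
open Pointwise Topology

private theorem keyNhds {G : Type*} [Group G] [TopologicalSpace G]
    (hright : ∀ a : G, IsHomeomorph (fun x : G => x * a)) (g : G)
    (hf1 : ∀ U : Set G, IsOpen U → U.Nonempty → (interior (g • U)).Nonempty)
    (hf2 : ∀ U : Set G, IsOpen U → U.Nonempty →
      (interior (g⁻¹ • U)).Nonempty ∧ g⁻¹ • U ⊆ closure (interior (g⁻¹ • U)))
    (hBaire : ∀ U ∈ 𝓝 (1 : G), ∃ W ∈ 𝓝 (1 : G), ∃ M : Set G,
      (1 : G) ∈ M ∧ M ⊆ W ∧ W ⊆ closure M ∧ W ⊆ U ∧ W * M⁻¹ ⊆ U) :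
    ∀ U ∈ 𝓝 (1 : G), g⁻¹ • U ∈ 𝓝 (g⁻¹) := by
  intro U hU
  obtain ⟨W, hW, M, h1M, hMW, hWclM, hWU, hWMU⟩ := hBaire U hU
  set O := interior W with hOdef
  have h1O : (1 : G) ∈ O := mem_interior_iff_mem_nhds.mpr hW
  obtain ⟨hPne, hPd⟩ := hf2 O isOpen_interior ⟨1, h1O⟩
  set P := interior (g⁻¹ • O) with hPdef
  have hPO : P ⊆ g⁻¹ • O := interior_subset
  obtain ⟨q, hq⟩ := hf1 P isOpen_interior hPne
  have hqP : q ∈ g • P := interior_subset hq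
  have hgPO : g • P ⊆ O := by
    intro x hx
    obtain ⟨p, hp, rfl⟩ := hx
    obtain ⟨o, ho, rfl⟩ := hPO hp
    simpa using ho
  have hqclM : q ∈ closure M := hWclM (interior_subset (hgPO hqP))
  obtain ⟨m, hmQ, hmM⟩ := mem_closure_iff.mp hqclM _ isOpen_interior hq
  have hmP : g⁻¹ * m ∈ P := by
    have := interior_subset hmQ
    obtain ⟨p, hp, rfl⟩ := this
    simpa [mul_assoc] using hp
  -- the open set P * m⁻¹ works
  set N : Set G := (fun x : G => x * m⁻¹) '' P with hNdef
  have hNopen : IsOpen N := (hright m⁻¹).isOpenMap _ isOpen_interior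
  have hgN : g⁻¹ ∈ N := ⟨g⁻¹ * m, hmP, by group⟩
  have hNsub : N ⊆ g⁻¹ • U := by
    rintro _ ⟨p, hp, rfl⟩
    obtain ⟨w, hw, rfl⟩ := hPO hp
    refine ⟨w * m⁻¹, hWMU (Set.mul_mem_mul (interior_subset hw) ?_),
      by simp [smul_eq_mul, mul_assoc]⟩
    exact Set.inv_mem_inv.mpr hmM
  exact Filter.mem_of_superset (hNopen.mem_nhds hgN) hNsub

private theorem contOfKey {G : Type*} [Group G] [TopologicalSpace G]
    (hright : ∀ a : G, IsHomeomorph (fun x : G => x * a)) (g : G)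
    (hkey : ∀ U ∈ 𝓝 (1 : G), g⁻¹ • U ∈ 𝓝 (g⁻¹)) :
    Continuous (fun x : G => g * x) := by
  rw [continuous_iff_continuousAt]
  intro x₀
  rw [ContinuousAt, Filter.tendsto_def]
  intro V hV
  have hU : (fun x : G => x * (g * x₀)⁻¹) '' V ∈ 𝓝 (1 : G) := by
    have := (hright (g * x₀)⁻¹).isOpenMap.image_mem_nhds hV
    simpa only [mul_inv_cancel] using this
  have h2 := hkey _ hU
  have h3 := (hright (g * x₀)).isOpenMap.image_mem_nhds h2
  have hx₀ : g⁻¹ * (g * x₀) = x₀ := by group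
  rw [hx₀] at h3
  refine Filter.mem_of_superset h3 ?_
  rintro _ ⟨_, ⟨_, ⟨v, hv, rfl⟩, rfl⟩, rfl⟩
  show g * (g⁻¹ • (v * (g * x₀)⁻¹) * (g * x₀)) ∈ V
  simpa [smul_eq_mul, mul_assoc] using hv

theorem stmt14 {G : Type*} [Group G] [TopologicalSpace G]
    (hright : ∀ a : G, IsHomeomorph (fun x : G => x * a)) (g : G)
    (hfeeble : ∀ U : Set G, IsOpen U → U.Nonempty →
      ((interior (g • U)).Nonempty ∧ g • U ⊆ closure (interior (g • U))) ∧
      ((interior (g⁻¹ • U)).Nonempty ∧ g⁻¹ • U ⊆ closure (interior (g⁻¹ • U))))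
    (hBaire : ∀ U ∈ 𝓝 (1 : G), ∃ W ∈ 𝓝 (1 : G), ∃ M : Set G,
      (1 : G) ∈ M ∧ M ⊆ W ∧ W ⊆ closure M ∧ W ⊆ U ∧ W * M⁻¹ ⊆ U) :
    IsHomeomorph (fun x : G => g * x) := by
  have key : ∀ U ∈ 𝓝 (1 : G), g⁻¹ • U ∈ 𝓝 (g⁻¹) :=
    keyNhds hright g (fun U h hn => (hfeeble U h hn).1.1)
      (fun U h hn => (hfeeble U h hn).2) hBaire
  have key' : ∀ U ∈ 𝓝 (1 : G), (g⁻¹)⁻¹ • U ∈ 𝓝 ((g⁻¹)⁻¹) :=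
    keyNhds hright g⁻¹ (fun U h hn => (hfeeble U h hn).2.1)
      (fun U h hn => by simpa [inv_inv] using (hfeeble U h hn).1) hBaire
  have hc : Continuous (fun x : G => g * x) := contOfKey hright g key
  have hc' : Continuous (fun x : G => g⁻¹ * x) := by
    refine contOfKey hright g⁻¹ ?_
    simpa [inv_inv] using key'
  exact Homeomorph.isHomeomorph ⟨Equiv.mulLeft g, hc, hc'⟩
end

section
/- Let G be a group with a topology in which all right translations are homeomorphisms, and let H be the set of g ∈ G such that left translation by g is a homeomorphism. Suppose for every neighborhood U of the identity there exist a neighborhood W of the identity and a set M with e ∈ M, M ⊆ W ⊆ closure(M), W ⊆ U, and W·M⁻¹ ⊆ U. Then inversion is continuous at e on H: for every neighborhood U of e there exists a neighborhood W of e with H ∩ W ⊆ U⁻¹. -/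
open Pointwise Topology

theorem mem_mul_inv_of_mem_closure {G : Type*} [Group G] [TopologicalSpace G] {x : G}
    {M W : Set G} (hx : IsOpenMap (x * ·)) (hxM : x ∈ closure M) (hW : W ∈ 𝓝 1) :
    x ∈ M * W⁻¹ := by
  have hxW : (x * ·) '' W ∈ 𝓝 x := by simpa using hx.image_mem_nhds hW
  obtain ⟨_, ⟨w, hw, rfl⟩, hm⟩ := mem_closure_iff_nhds.mp hxM _ hxW
  exact ⟨x * w, hm, w⁻¹, Set.inv_mem_inv.mpr hw, by group⟩

theorem stmt15_general {G : Type*} [Group G] [TopologicalSpace G]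
    (H : Set G) (hH : H = {g : G | IsHomeomorph (fun x : G => g * x)})
    (hBaire : ∀ U ∈ 𝓝 (1 : G), ∃ W ∈ 𝓝 (1 : G), ∃ M : Set G,
      (1 : G) ∈ M ∧ M ⊆ W ∧ W ⊆ closure M ∧ W ⊆ U ∧ W * M⁻¹ ⊆ U) :
    ∀ U ∈ 𝓝 (1 : G), ∃ W ∈ 𝓝 (1 : G), H ∩ W ⊆ U⁻¹ := by
  intro U hU
  obtain ⟨W, hW, M, -, -, hWM, -, hWMU⟩ := hBaire U hU
  refine ⟨W, hW, fun x ⟨hxH, hxW⟩ => ?_⟩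
  rw [hH] at hxH
  have hxMW : x ∈ M * W⁻¹ := mem_mul_inv_of_mem_closure hxH.isOpenMap (hWM hxW) hW
  have hxinv : x⁻¹ ∈ W * M⁻¹ := by
    simpa only [mul_inv_rev, inv_inv] using Set.inv_mem_inv.mpr hxMW
  exact Set.mem_inv.mpr (hWMU hxinv)

theorem stmt15 {G : Type*} [Group G] [TopologicalSpace G]
    (hright : ∀ a : G, IsHomeomorph (fun x : G => x * a))
    (H : Set G) (hH : H = {g : G | IsHomeomorph (fun x : G => g * x)})
    (hBaire : ∀ U ∈ 𝓝 (1 : G), ∃ W ∈ 𝓝 (1 : G), ∃ M : Set G,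
      (1 : G) ∈ M ∧ M ⊆ W ∧ W ⊆ closure M ∧ W ⊆ U ∧ W * M⁻¹ ⊆ U) :
    ∀ U ∈ 𝓝 (1 : G), ∃ W ∈ 𝓝 (1 : G), H ∩ W ⊆ U⁻¹ :=
  stmt15_general H hH hBaire
end

section
/- Let G be a paratopological group and U a neighborhood of the identity e. If there exists a neighborhood V of e with V·V ⊆ U, and W is a neighborhood of e with W·W⁻¹ ⊆ closure(V·V), then W·W⁻¹ ⊆ closure(U); consequently, if G is semiregular and for every neighborhood V of e some neighborhood W of e satisfies W·W⁻¹ ⊆ closure(V), then inversion is continuous at e. -/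
open Pointwise Topology

theorem stmt17 {G : Type*} [Group G] [TopologicalSpace G] [ContinuousMul G] :
    (∀ U ∈ 𝓝 (1 : G), ∀ V ∈ 𝓝 (1 : G), V * V ⊆ U →
      ∀ W ∈ 𝓝 (1 : G), W * W⁻¹ ⊆ closure (V * V) → W * W⁻¹ ⊆ closure U) ∧
    ((∀ U : Set G, IsOpen U → ∀ x ∈ U,
        ∃ O : Set G, O = interior (closure O) ∧ x ∈ O ∧ O ⊆ U) →
      (∀ V ∈ 𝓝 (1 : G), ∃ W ∈ 𝓝 (1 : G), W * W⁻¹ ⊆ closure V) →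
      ∀ U ∈ 𝓝 (1 : G), ∃ W ∈ 𝓝 (1 : G), W⁻¹ ⊆ U) := by
  constructor
  · intro U hU V hV hVV W hW hWW
    exact hWW.trans (closure_mono hVV)
  · intro hsemi hcond U hU
    -- get regular open O with 1 ∈ O ⊆ interior U
    obtain ⟨O, hOreg, hO1, hOU⟩ := hsemi (interior U) isOpen_interior 1 (mem_interior_iff_mem_nhds.2 hU)
    have hOopen : IsOpen O := hOreg ▸ isOpen_interior
    obtain ⟨W, hW, hWO⟩ := hcond O (hOopen.mem_nhds hO1)
    refine ⟨interior W, interior_mem_nhds.2 hW, ?_⟩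
    have h1 : (1 : G) ∈ interior W := mem_interior_iff_mem_nhds.2 hW
    have hsub : (interior W)⁻¹ ⊆ interior W * (interior W)⁻¹ := fun x hx =>
      ⟨1, h1, x, hx, one_mul x⟩
    have hopen : IsOpen (interior W * (interior W)⁻¹) := isOpen_interior.mul_right
    have hsub2 : interior W * (interior W)⁻¹ ⊆ closure O :=
      (Set.mul_subset_mul interior_subset (Set.inv_subset_inv.2 interior_subset)).trans hWO
    have : interior W * (interior W)⁻¹ ⊆ O := by
      rw [hOreg]
      exact hopen.subset_interior_iff.2 hsub2
    exact hsub.trans (this.trans (hOU.trans interior_subset))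
end
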